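/- arXiv:1905.09617 — 5 statements merged into one kernel-verified Lean document; each statement's English description precedes it below -/
import Mathlib

section
/- A commutative ring A is von Neumann regular if and only if A is reduced and its prime spectrum Spec(A), equipped with the Zariski topology, is a Boolean space, i.e., a compact Hausdorff totally disconnected space. -/
/-!
If `a = a²x` then `e = ax` is an idempotent with `D(a) = D(e)`, so every basic open set of
`Spec A` is clopen; a T0 space with a clopen basis is totally separated, hence Hausdorff and
totally disconnected. Conversely, a Hausdorff spectrum is T1, so every prime is maximal and
hence minimal. In a reduced ring an element `a` of a minimal prime `p` is killed by some
`s ∉ p`, because `A_p` is a field. Thus the ideal `{s | sa ∈ (a²)}`, which contains `a`, lies in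
no maximal ideal, so `a ∈ (a²)`.
-/

open PrimeSpectrum TopologicalSpace

section

variable {A : Type*} [CommRing A]

section Regular

variable (h : ∀ a : A, ∃ x : A, a = a ^ 2 * x)
include h

lemma isReduced_of_forall_eq_sq_mul : IsReduced A :=
  (isReduced_iff_pow_one_lt 2 one_lt_two).mpr fun a ha ↦ by
    obtain ⟨x, hx⟩ := h a
    rw [hx, ha, zero_mul]

lemma isClopen_basicOpen_of_forall_eq_sq_mul (a : A) :
    IsClopen (basicOpen a : Set (PrimeSpectrum A)) := by
  obtain ⟨x, hx⟩ := h a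
  have hax : a = a * x * a := by linear_combination hx
  refine isClopen_iff.mpr ⟨a * x, ?_, ?_⟩
  · calc a * x * (a * x) = a ^ 2 * x * x := by ring
      _ = a * x := by rw [← hx]
  · refine congrArg _ (le_antisymm ?_ (basicOpen_mul_le_left a x))
    conv_lhs => rw [hax]
    exact basicOpen_mul_le_left (a * x) a

lemma isTopologicalBasis_isClopen_of_forall_eq_sq_mul :
    IsTopologicalBasis {s : Set (PrimeSpectrum A) | IsClopen s} :=
  isTopologicalBasis_basic_opens.of_isOpen_of_subset (fun _ hs ↦ hs.isOpen) <| by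
    rintro _ ⟨a, rfl⟩
    exact isClopen_basicOpen_of_forall_eq_sq_mul h a

lemma totallySeparatedSpace_of_forall_eq_sq_mul : TotallySeparatedSpace (PrimeSpectrum A) :=
  totallySeparatedSpace_of_t0_of_basis_clopen (isTopologicalBasis_isClopen_of_forall_eq_sq_mul h)

end Regular

lemma PrimeSpectrum.krullDimLE_zero_of_t1Space [T1Space (PrimeSpectrum A)] :
    Ring.KrullDimLE 0 A :=
  .mk₀ fun p hp ↦ (isClosed_singleton_iff_isMaximal ⟨p, hp⟩).mp isClosed_singleton

lemma Ideal.exists_notMem_mul_eq_zero_of_mem_minimalPrimes [IsReduced A] {p : Ideal A}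
    (hp : p ∈ minimalPrimes A) {a : A} (ha : a ∈ p) : ∃ s ∉ p, s * a = 0 := by
  have := hp.1.1
  have : Ring.KrullDimLE 0 (Localization.AtPrime p) := .of_isLocalization p hp _
  have hfield := Ring.KrullDimLE.isField_of_isReduced (R := Localization.AtPrime p)
  have hmem := (IsLocalization.AtPrime.to_map_mem_maximal_iff (Localization.AtPrime p) p a).mpr ha
  rw [IsLocalRing.isField_iff_maximalIdeal_eq.mp hfield, Ideal.mem_bot] at hmem
  obtain ⟨⟨s, hs⟩, hsa⟩ := (IsLocalization.map_eq_zero_iff p.primeCompl _ a).mp hmem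
  exact ⟨s, hs, hsa⟩

lemma exists_eq_sq_mul_of_krullDimLE_zero [IsReduced A] [Ring.KrullDimLE 0 A] (a : A) :
    ∃ x : A, a = a ^ 2 * x := by
  set J := (Ideal.span {a ^ 2}).colon (Ideal.span {a})
  have haJ : a ∈ J := Ideal.mem_colon_span_singleton.mpr <| by
    rw [← sq]
    exact Ideal.mem_span_singleton_self _
  have ha : a ∈ Ideal.span {a ^ 2} := by
    suffices hJ : J = ⊤ by
      simpa using Ideal.mem_colon_span_singleton.mp (hJ ▸ Submodule.mem_top : (1 : A) ∈ J)
    by_contra hJ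
    obtain ⟨m, hm, hJm⟩ := J.exists_le_maximal hJ
    obtain ⟨s, hsm, hsa⟩ := Ideal.exists_notMem_mul_eq_zero_of_mem_minimalPrimes
      (Ideal.mem_minimalPrimes_of_krullDimLE_zero m) (hJm haJ)
    exact hsm (hJm (Ideal.mem_colon_span_singleton.mpr (hsa ▸ Ideal.zero_mem _)))
  obtain ⟨x, hx⟩ := Ideal.mem_span_singleton'.mp ha
  exact ⟨x, by linear_combination -hx⟩

end

/-- A commutative ring is von Neumann regular iff it is reduced and its prime spectrum
(with the Zariski topology) is a Boolean space (compact, Hausdorff, totally disconnected). -/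
theorem vonNeumannRegular_iff_reduced_and_boolean_spectrum
    (A : Type*) [CommRing A] :
    (∀ a : A, ∃ x : A, a = a ^ 2 * x) ↔
      (IsReduced A ∧ CompactSpace (PrimeSpectrum A) ∧ T2Space (PrimeSpectrum A) ∧
        TotallyDisconnectedSpace (PrimeSpectrum A)) := by
  refine ⟨fun h ↦ ?_, ?_⟩
  · have := totallySeparatedSpace_of_forall_eq_sq_mul h
    exact ⟨isReduced_of_forall_eq_sq_mul h, inferInstance, inferInstance, inferInstance⟩
  · rintro ⟨_, -, _, -⟩
    have := PrimeSpectrum.krullDimLE_zero_of_t1Space (A := A)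
    exact exists_eq_sq_mul_of_krullDimLE_zero
end

section
/- Let A be a von Neumann regular commutative ring and p a prime ideal of A. Then the quotient ring A ⧸ p is isomorphic as a ring to the localization of A at p. -/
/-!
If `a = a ^ 2 * x`, then `a * (1 - a * x) = 0`. Hence a von Neumann regular domain is a field,
so every prime `p` of `A` is maximal (`A ⧸ p` is again von Neumann regular), and in a von Neumann
regular local ring every nonunit `a` vanishes because `1 - a * x` is a unit. As `Aₚ` is von Neumann
regular, its maximal ideal is zero, and the residue field isomorphism `A ⧸ p ≃+* Aₚ ⧸ 𝔪ₚ` reads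
`A ⧸ p ≃+* Aₚ`.
-/

open IsLocalRing

def IsVonNeumannRegular (A : Type*) [Monoid A] : Prop :=
  ∀ a : A, ∃ x : A, a = a ^ 2 * x

namespace IsVonNeumannRegular

theorem of_surjective {A B F : Type*} [Monoid A] [Monoid B] [FunLike F A B] [MonoidHomClass F A B]
    (hA : IsVonNeumannRegular A) (f : F) (hf : Function.Surjective f) :
    IsVonNeumannRegular B := by
  intro b
  obtain ⟨a, rfl⟩ := hf b
  obtain ⟨x, hx⟩ := hA a
  exact ⟨f x, by rw [← map_pow, ← map_mul, ← hx]⟩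

theorem of_isLocalization {R : Type*} [CommSemiring R] (M : Submonoid R) (S : Type*)
    [CommSemiring S] [Algebra R S] [IsLocalization M S] (hR : IsVonNeumannRegular R) :
    IsVonNeumannRegular S := by
  intro z
  obtain ⟨a, s, rfl⟩ := IsLocalization.exists_mk'_eq M z
  obtain ⟨x, hx⟩ := hR a
  -- `(a / s) ^ 2 * (x * s) = a ^ 2 * x / s = a / s`
  refine ⟨algebraMap R S (x * s), ?_⟩
  rw [mul_comm, sq, ← IsLocalization.mk'_mul, IsLocalization.mul_mk'_eq_mk'_of_mul,
    IsLocalization.mk'_eq_iff_eq, Submonoid.coe_mul]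
  congr 1
  conv_lhs => rw [hx]
  ring

theorem isField {A : Type*} [CommSemiring A] [IsDomain A] (hA : IsVonNeumannRegular A) :
    IsField A := by
  refine ⟨exists_pair_ne A, mul_comm, fun {a} ha => ?_⟩
  obtain ⟨x, hx⟩ := hA a
  refine ⟨x, mul_left_cancel₀ ha ?_⟩
  rw [mul_one, ← mul_assoc, ← sq, ← hx]

theorem isMaximal_of_isPrime {A : Type*} [CommRing A] (hA : IsVonNeumannRegular A)
    (p : Ideal A) [p.IsPrime] : p.IsMaximal :=
  Ideal.Quotient.maximal_of_isField p (hA.of_surjective _ Ideal.Quotient.mk_surjective).isField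

theorem maximalIdeal_eq_bot {A : Type*} [CommRing A] [IsLocalRing A]
    (hA : IsVonNeumannRegular A) : maximalIdeal A = ⊥ := by
  refine eq_bot_iff.mpr fun a ha => ?_
  obtain ⟨x, hx⟩ := hA a
  have hax : a * x ∈ maximalIdeal A := Ideal.mul_mem_right x _ ha
  have hunit : IsUnit (1 - a * x) := (isUnit_or_isUnit_one_sub_self (a * x)).resolve_left hax
  have hzero : a * (1 - a * x) = 0 := by linear_combination hx
  exact Ideal.mem_bot.mpr (hunit.mul_left_eq_zero.mp hzero)

end IsVonNeumannRegular

/-- For a von Neumann regular commutative ring `A` and a prime ideal `p`,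
the quotient `A ⧸ p` is ring-isomorphic to the localization of `A` at `p`. -/
theorem vonNeumannRegular_quotient_iso_localization_atPrime
    (A : Type*) [CommRing A] (hA : ∀ a : A, ∃ x : A, a = a ^ 2 * x)
    (p : Ideal A) [p.IsPrime] :
    Nonempty ((A ⧸ p) ≃+* Localization.AtPrime p) := by
  have hA : IsVonNeumannRegular A := hA
  have := hA.isMaximal_of_isPrime p
  have h𝔪 := (hA.of_isLocalization p.primeCompl (Localization.AtPrime p)).maximalIdeal_eq_bot
  exact ⟨(IsLocalization.AtPrime.equivQuotMaximalIdeal p _).trans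
    ((Ideal.quotEquivOfEq h𝔪).trans (RingEquiv.quotientBot _))⟩
end

section
/- Let A and B be von Neumann regular commutative rings and let f, g : A → B be ring homomorphisms. Then the equalizer subring E = { a ∈ A : f(a) = g(a) }, with the ring structure inherited from A, is a von Neumann regular commutative ring. In particular, for every a ∈ E the unique b ∈ A satisfying a = a² * b and b = b² * a belongs to E. -/
/-- Unlike the `x` in `a = a ^ 2 * x`, a quasi-inverse of `a` is unique, which is what makes it
respected by homomorphisms. -/
def IsQuasiInverse {M : Type*} [Monoid M] (a b : M) : Prop :=
  a = a ^ 2 * b ∧ b = b ^ 2 * a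

namespace IsQuasiInverse

variable {M N : Type*} [CommMonoid M] [CommMonoid N]

theorem of_eq_sq_mul {a x : M} (h : a = a ^ 2 * x) : IsQuasiInverse a (x ^ 2 * a) := by
  have hax : a * (a * x) = a := by rw [← mul_assoc, ← sq, ← h]
  constructor
  · calc a = a * (a * x) := hax.symm
      _ = a ^ 2 * x * (a * x) := by rw [← h]
      _ = a ^ 2 * (x ^ 2 * a) := by simp only [sq]; ac_rfl
  · calc x ^ 2 * a = x ^ 2 * (a ^ 2 * x * (a * x)) := by rw [← h, hax]
      _ = (x ^ 2 * a) ^ 2 * a := by simp only [sq]; ac_rfl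

theorem eq_mul_mul {a b c : M} (hb : IsQuasiInverse a b) (hc : IsQuasiInverse a c) :
    b = b * (a * c) :=
  calc b = b ^ 2 * a := hb.2
    _ = b ^ 2 * (a ^ 2 * c) := by rw [← hc.1]
    _ = b ^ 2 * a * (a * c) := by simp only [sq]; ac_rfl
    _ = b * (a * c) := by rw [← hb.2]

theorem unique {a b c : M} (hb : IsQuasiInverse a b) (hc : IsQuasiInverse a c) : b = c :=
  calc b = b * (a * c) := hb.eq_mul_mul hc
    _ = c * (a * b) := by ac_rfl
    _ = c := (hc.eq_mul_mul hb).symm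

theorem map {F : Type*} [FunLike F M N] [MonoidHomClass F M N] (f : F) {a b : M}
    (h : IsQuasiInverse a b) : IsQuasiInverse (f a) (f b) :=
  ⟨by rw [← map_pow, ← map_mul, ← h.1], by rw [← map_pow, ← map_mul, ← h.2]⟩

theorem map_eq_of_map_eq {F : Type*} [FunLike F M N] [MonoidHomClass F M N] (f g : F) {a b : M}
    (h : IsQuasiInverse a b) (ha : f a = g a) : f b = g b :=
  (h.map f).unique (ha ▸ h.map g)

end IsQuasiInverse

theorem vonNeumannRegular_eqLocus_general
    (A B : Type*) [CommRing A] [CommRing B]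
    (hA : ∀ a : A, ∃ x : A, a = a ^ 2 * x)
    (f g : A →+* B) :
    (∀ a : f.eqLocus g, ∃ x : f.eqLocus g, a = a ^ 2 * x) ∧
      ∀ a b : A, a ∈ f.eqLocus g → (a = a ^ 2 * b ∧ b = b ^ 2 * a) → b ∈ f.eqLocus g := by
  refine ⟨fun a => ?_, fun a b ha hab => IsQuasiInverse.map_eq_of_map_eq f g hab ha⟩
  obtain ⟨x, hx⟩ := hA a
  have hq := IsQuasiInverse.of_eq_sq_mul hx
  exact ⟨⟨_, hq.map_eq_of_map_eq f g a.2⟩, Subtype.ext hq.1⟩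

/-- The equalizer of two ring homomorphisms between von Neumann regular commutative rings
is a von Neumann regular commutative ring; in particular the quasi-inverse of any element
of the equalizer again belongs to the equalizer. -/
theorem vonNeumannRegular_eqLocus
    (A B : Type*) [CommRing A] [CommRing B]
    (hA : ∀ a : A, ∃ x : A, a = a ^ 2 * x) (hB : ∀ b : B, ∃ x : B, b = b ^ 2 * x)
    (f g : A →+* B) :
    (∀ a : f.eqLocus g, ∃ x : f.eqLocus g, a = a ^ 2 * x) ∧
      ∀ a b : A, a ∈ f.eqLocus g → (a = a ^ 2 * b ∧ b = b ^ 2 * a) → b ∈ f.eqLocus g :=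
  vonNeumannRegular_eqLocus_general A B hA f g
end

section
/- For every commutative ring A there exist a von Neumann regular commutative ring V and a ring homomorphism ν : A → V with the following universal property: for every von Neumann regular commutative ring B and every ring homomorphism f : A → B there exists a unique ring homomorphism g : V → B with g ∘ ν = f. (V together with ν is the von Neumann regular hull of A.) -/
/-!
The hull is presented by generators and relations. Take the polynomial ring over `A` on the
syntax trees built from elements of `A` by `+`, `*` and a formal quasi-inverse `inv`, and impose
that each tree of the form `t + s`, `t * s` or `a` evaluates as such, and that `inv t` is a
strong quasi-inverse of `t` (`t = t² · inv t` and `inv t = (inv t)² · t`). Every element of the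
quotient is then the class of a single tree, hence has a quasi-inverse. Homomorphisms out of the
quotient are determined on `A` because strong quasi-inverses are unique; they exist into any von
Neumann regular ring because there `b` has the strong quasi-inverse `x² b` whenever `b = b² x`.
-/

universe u v

def IsStrongQuasiInverse {R : Type*} [CommRing R] (a x : R) : Prop :=
  a = a ^ 2 * x ∧ x = x ^ 2 * a

section StrongQuasiInverse

variable {R S : Type*} [CommRing R] [CommRing S]

theorem isStrongQuasiInverse_sq_mul {a x : R} (h : a = a ^ 2 * x) :
    IsStrongQuasiInverse a (x ^ 2 * a) :=
  ⟨by linear_combination (1 + a * x) * h,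
    by linear_combination (x ^ 2 + x ^ 3 * a) * h⟩

theorem IsStrongQuasiInverse.unique {a x y : R} (hx : IsStrongQuasiInverse a x)
    (hy : IsStrongQuasiInverse a y) : x = y := by
  linear_combination hx.2 - hy.2 + (x ^ 2 + x * y) * hy.1 - (y ^ 2 + x * y) * hx.1

theorem IsStrongQuasiInverse.map {a x : R} (h : IsStrongQuasiInverse a x) (f : R →+* S) :
    IsStrongQuasiInverse (f a) (f x) :=
  ⟨by simpa using congrArg f h.1, by simpa using congrArg f h.2⟩

end StrongQuasiInverse

namespace VonNeumannRegularHull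

inductive Term (A : Type u) : Type u
  | of : A → Term A
  | add : Term A → Term A → Term A
  | mul : Term A → Term A → Term A
  | inv : Term A → Term A

open MvPolynomial

variable (A : Type u) [CommRing A]

inductive Rel : MvPolynomial (Term A) A → MvPolynomial (Term A) A → Prop
  | of (a : A) : Rel (X (.of a)) (C a)
  | add (t s : Term A) : Rel (X (.add t s)) (X t + X s)
  | mul (t s : Term A) : Rel (X (.mul t s)) (X t * X s)
  | inv_left (t : Term A) : Rel (X t) (X t ^ 2 * X (.inv t))
  | inv_right (t : Term A) : Rel (X (.inv t)) (X (.inv t) ^ 2 * X t)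

abbrev Hull : Type u := RingQuot (Rel A)

noncomputable def mk : MvPolynomial (Term A) A →+* Hull A := RingQuot.mkRingHom (Rel A)

noncomputable def toHull : A →+* Hull A := (mk A).comp C

variable {A}

theorem mk_eq_of_rel {p q : MvPolynomial (Term A) A} (h : Rel A p q) : mk A p = mk A q :=
  RingQuot.mkRingHom_rel h

theorem mk_X_of (a : A) : mk A (X (.of a)) = toHull A a :=
  mk_eq_of_rel (Rel.of a)

theorem mk_X_add (t s : Term A) : mk A (X (.add t s)) = mk A (X t) + mk A (X s) := by
  rw [mk_eq_of_rel (Rel.add t s), map_add]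

theorem mk_X_mul (t s : Term A) : mk A (X (.mul t s)) = mk A (X t) * mk A (X s) := by
  rw [mk_eq_of_rel (Rel.mul t s), map_mul]

theorem isStrongQuasiInverse_mk_X_inv (t : Term A) :
    IsStrongQuasiInverse (mk A (X t)) (mk A (X (.inv t))) :=
  ⟨by simpa only [map_mul, map_pow] using mk_eq_of_rel (Rel.inv_left t),
    by simpa only [map_mul, map_pow] using mk_eq_of_rel (Rel.inv_right t)⟩

theorem exists_mk_X_eq (v : Hull A) : ∃ t : Term A, mk A (X t) = v := by
  obtain ⟨p, rfl⟩ := RingQuot.mkRingHom_surjective (Rel A) v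
  induction p using MvPolynomial.induction_on with
  | C a => exact ⟨.of a, mk_X_of a⟩
  | add p q hp hq =>
    obtain ⟨t, ht⟩ := hp
    obtain ⟨s, hs⟩ := hq
    exact ⟨.add t s, by rw [mk_X_add, ht, hs, map_add]⟩
  | mul_X p n hp =>
    obtain ⟨t, ht⟩ := hp
    exact ⟨.mul t n, by rw [mk_X_mul, ht, map_mul]; rfl⟩

theorem exists_eq_sq_mul (v : Hull A) : ∃ x : Hull A, v = v ^ 2 * x := by
  obtain ⟨t, rfl⟩ := exists_mk_X_eq v
  exact ⟨_, (isStrongQuasiInverse_mk_X_inv t).1⟩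

theorem ringHom_ext {B : Type v} [CommRing B] {g₁ g₂ : Hull A →+* B}
    (h : g₁.comp (toHull A) = g₂.comp (toHull A)) : g₁ = g₂ := by
  have h_term (t : Term A) : g₁ (mk A (X t)) = g₂ (mk A (X t)) := by
    induction t with
    | of a => rw [mk_X_of]; exact RingHom.congr_fun h a
    | add t s iht ihs => rw [mk_X_add, map_add, map_add, iht, ihs]
    | mul t s iht ihs => rw [mk_X_mul, map_mul, map_mul, iht, ihs]
    | inv t iht =>
      have h₁ := (isStrongQuasiInverse_mk_X_inv t).map g₁
      rw [iht] at h₁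
      exact h₁.unique ((isStrongQuasiInverse_mk_X_inv t).map g₂)
  refine RingHom.ext fun v => ?_
  obtain ⟨t, rfl⟩ := exists_mk_X_eq v
  exact h_term t

section Lift

variable {B : Type v} [CommRing B] (f : A →+* B) (q : B → B)

def Term.eval : Term A → B
  | .of a => f a
  | .add t s => t.eval + s.eval
  | .mul t s => t.eval * s.eval
  | .inv t => q t.eval

variable (hq : ∀ b, IsStrongQuasiInverse b (q b))

noncomputable def lift : Hull A →+* B :=
  RingQuot.lift ⟨eval₂Hom f (Term.eval f q), by
    rintro _ _ (a | ⟨t, s⟩ | ⟨t, s⟩ | t | t) <;>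
      simp [Term.eval, ← (hq _).1, ← (hq _).2]⟩

theorem lift_comp_toHull : (lift f q hq).comp (toHull A) = f := by
  ext a
  simp [lift, toHull, mk]

end Lift

end VonNeumannRegularHull

open VonNeumannRegularHull in
/-- Every commutative ring has a von Neumann regular hull: a von Neumann regular ring `V`
and a homomorphism `ν : A → V` through which every homomorphism from `A` to a
von Neumann regular ring factors uniquely. -/
theorem exists_vonNeumannRegular_hull (A : Type u) [CommRing A] :
    ∃ (V : Type u) (_ : CommRing V) (ν : A →+* V),
      (∀ v : V, ∃ x : V, v = v ^ 2 * x) ∧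
      ∀ (B : Type v) (_ : CommRing B), (∀ b : B, ∃ x : B, b = b ^ 2 * x) →
        ∀ f : A →+* B, ∃! g : V →+* B, g.comp ν = f := by
  refine ⟨Hull A, inferInstance, toHull A, exists_eq_sq_mul, fun B _ hB f => ?_⟩
  choose x hx using hB
  have hq (b : B) : IsStrongQuasiInverse b (x b ^ 2 * b) := isStrongQuasiInverse_sq_mul (hx b)
  refine ⟨lift f _ hq, lift_comp_toHull f _ hq, fun g hg => ringHom_ext ?_⟩
  rw [hg, lift_comp_toHull]
end

section
/- For every Boolean space X there exists a von Neumann regular commutative ring R such that the prime spectrum Spec(R), equipped with the Zariski topology, is homeomorphic to X. -/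
/-!
Locally constant `ZMod 2`-valued functions on `X` form a Boolean ring, whose spectrum is
Hausdorff because its basic opens are clopen. Evaluation at points maps `X` continuously into
this spectrum, injectively because clopens separate points, and with dense image because a
nonzero function is nonzero somewhere. For compact `X` the image is also closed, so the map is a
continuous bijection from a compact space onto a Hausdorff one, hence a homeomorphism.
-/

theorem PrimeSpectrum.totallySeparatedSpace_of_forall_isIdempotentElem {R : Type*} [CommRing R]
    (h : ∀ e : R, IsIdempotentElem e) : TotallySeparatedSpace (PrimeSpectrum R) :=
  totallySeparatedSpace_of_t0_of_basis_clopen <|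
    isTopologicalBasis_basic_opens.of_isOpen_of_subset (fun _ hs ↦ hs.isOpen) <| by
      rintro _ ⟨e, rfl⟩
      exact isClopen_iff.2 ⟨e, h e, rfl⟩

theorem DenseRange.surjective_of_compactSpace {X Y : Type*} [TopologicalSpace X]
    [TopologicalSpace Y] [CompactSpace X] [T2Space Y] {f : X → Y} (hd : DenseRange f)
    (hf : Continuous f) : Function.Surjective f := by
  rw [← Set.range_eq_univ, ← hd.closure_range, (isCompact_range hf).isClosed.closure_eq]

namespace LocallyConstant

variable {X : Type*} [TopologicalSpace X] {K : Type*} [CommRing K] [IsDomain K]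

variable (K) in
def primeSpectrumOfPoint (x : X) : PrimeSpectrum (LocallyConstant X K) :=
  ⟨RingHom.ker (evalRingHom x), RingHom.ker_isPrime _⟩

theorem mem_primeSpectrumOfPoint_iff {x : X} {f : LocallyConstant X K} :
    f ∈ (primeSpectrumOfPoint K x).asIdeal ↔ f x = 0 := Iff.rfl

theorem continuous_primeSpectrumOfPoint : Continuous (primeSpectrumOfPoint (X := X) K) := by
  rw [PrimeSpectrum.isTopologicalBasis_basic_opens.continuous_iff]
  rintro _ ⟨f, rfl⟩
  exact f.isLocallyConstant {0}ᶜ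

theorem denseRange_primeSpectrumOfPoint : DenseRange (primeSpectrumOfPoint (X := X) K) := by
  rw [DenseRange, PrimeSpectrum.isTopologicalBasis_basic_opens.dense_iff]
  rintro _ ⟨f, rfl⟩ ⟨p, hp⟩
  have hf : f ≠ 0 := by
    rintro rfl
    simp at hp
  obtain ⟨x, hx⟩ : ∃ x, f x ≠ 0 := by
    by_contra! h
    exact hf (ext h)
  exact ⟨_, hx, x, rfl⟩

theorem injective_primeSpectrumOfPoint [TotallySeparatedSpace X] :
    Function.Injective (primeSpectrumOfPoint (X := X) K) := by
  intro x y hxy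
  by_contra hne
  obtain ⟨U, hU, hxU, hyU⟩ := exists_isClopen_of_totally_separated hne
  have : charFn K hU ∈ (primeSpectrumOfPoint K y).asIdeal := (charFn_eq_zero K y hU).2 hyU
  rw [← hxy, mem_primeSpectrumOfPoint_iff] at this
  exact one_ne_zero (((charFn_eq_one K x hU).2 hxU).symm.trans this)

theorem isIdempotentElem_zmod_two (f : LocallyConstant X (ZMod 2)) : IsIdempotentElem f := by
  ext x
  exact (sq (f x)).symm.trans (ZMod.pow_card _)

noncomputable def primeSpectrumHomeomorph [CompactSpace X] [TotallySeparatedSpace X] :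
    X ≃ₜ PrimeSpectrum (LocallyConstant X (ZMod 2)) :=
  haveI := PrimeSpectrum.totallySeparatedSpace_of_forall_isIdempotentElem
    (isIdempotentElem_zmod_two (X := X))
  continuous_primeSpectrumOfPoint.homeoOfEquivCompactToT2 (f := .ofBijective _
    ⟨injective_primeSpectrumOfPoint, denseRange_primeSpectrumOfPoint.surjective_of_compactSpace
      continuous_primeSpectrumOfPoint⟩)

end LocallyConstant

/-- Every Boolean space (compact Hausdorff totally disconnected space) is homeomorphic to
the prime spectrum of some von Neumann regular commutative ring. -/
theorem booleanSpace_homeomorph_primeSpectrum_vonNeumannRegular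
    (X : Type u) [TopologicalSpace X] [CompactSpace X] [T2Space X]
    [TotallyDisconnectedSpace X] :
    ∃ (R : Type u) (_ : CommRing R), (∀ a : R, ∃ x : R, a = a ^ 2 * x) ∧
      Nonempty (PrimeSpectrum R ≃ₜ X) := by
  refine ⟨LocallyConstant X (ZMod 2), inferInstance, fun a ↦ ⟨1, ?_⟩,
    ⟨LocallyConstant.primeSpectrumHomeomorph.symm⟩⟩
  rw [mul_one, sq, (LocallyConstant.isIdempotentElem_zmod_two a).eq]
end
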